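/- Define the Carreau stress S(D) := 2ν(ε² + |D|²)^{(r−2)/2} D on symmetric matrices, with ν > 0, ε > 0, r ∈ (1,2]. Then S is monotone: (S(D₁) − S(D₂)):(D₁ − D₂) ≥ 0 for all symmetric D₁, D₂. -/

import Mathlib

/-!
For `r ≥ 1` both factors of `t (c + t²)^{(r-2)/2} = √(t² / (c + t²)) · (c + t²)^{(r-1)/2}`
increase on `[0, ∞)`. For any radial map `x ↦ φ(‖x‖) x` with `t ↦ t φ(t)` increasing,
Cauchy–Schwarz gives `⟪φ(‖x‖) x - φ(‖y‖) y, x - y⟫ ≥ (‖x‖ - ‖y‖)(φ(‖x‖)‖x‖ - φ(‖y‖)‖y‖) ≥ 0`;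
the Frobenius pairing is the inner product of `EuclideanSpace ℝ (Fin d × Fin d)`.
-/

/-- The Frobenius pairing `A : B = Σ_{ij} A_{ij} B_{ij}`. -/
def frob2 {d : ℕ} (A B : Fin d → Fin d → ℝ) : ℝ := ∑ i, ∑ j, A i j * B i j

/-- The Frobenius norm `|A| = (A:A)^{1/2}`. -/
noncomputable def fnorm {d : ℕ} (A : Fin d → Fin d → ℝ) : ℝ := Real.sqrt (frob2 A A)

/-- The Carreau stress `S(D) = 2ν (ε² + |D|²)^{(r−2)/2} D`. -/
noncomputable def carreau {d : ℕ} (ν ε r : ℝ) (D : Fin d → Fin d → ℝ) :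
    Fin d → Fin d → ℝ :=
  (2 * ν * (ε ^ 2 + fnorm D ^ 2) ^ ((r - 2) / 2)) • D

open Set RealInnerProductSpace

theorem monotoneOn_mul_rpow_add_sq {c r : ℝ} (hc : 0 < c) (hr : 1 ≤ r) :
    MonotoneOn (fun t : ℝ => t * (c + t ^ 2) ^ ((r - 2) / 2)) (Ici 0) := by
  have hsplit : ∀ t : ℝ, 0 ≤ t →
      t * (c + t ^ 2) ^ ((r - 2) / 2) = √(t ^ 2 / (c + t ^ 2)) * (c + t ^ 2) ^ ((r - 1) / 2) := by
    intro t ht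
    have hpos : 0 < c + t ^ 2 := by positivity
    rw [Real.sqrt_div' _ hpos.le, Real.sqrt_sq ht, Real.sqrt_eq_rpow,
      show (r - 2) / 2 = (r - 1) / 2 - 1 / 2 by ring, Real.rpow_sub hpos]
    ring
  intro s (hs : 0 ≤ s) t (ht : 0 ≤ t) hst
  have hsq : s ^ 2 ≤ t ^ 2 := pow_le_pow_left₀ hs hst 2
  have hs' : 0 < c + s ^ 2 := by positivity
  have ht' : 0 < c + t ^ 2 := by positivity
  simp only [hsplit s hs, hsplit t ht]
  have hratio : s ^ 2 / (c + s ^ 2) ≤ t ^ 2 / (c + t ^ 2) := by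
    rw [div_le_div_iff₀ hs' ht']
    nlinarith
  exact mul_le_mul (Real.sqrt_le_sqrt hratio)
    (Real.rpow_le_rpow hs'.le (by linarith) (by linarith)) (by positivity) (Real.sqrt_nonneg _)

section

variable {E : Type*} [NormedAddCommGroup E] [InnerProductSpace ℝ E]

theorem real_inner_smul_sub_smul_sub_nonneg {a b : ℝ} (hab : 0 ≤ a + b) (x y : E)
    (h : 0 ≤ (‖x‖ - ‖y‖) * (a * ‖x‖ - b * ‖y‖)) : 0 ≤ ⟪a • x - b • y, x - y⟫ := by
  have hexpand : ⟪a • x - b • y, x - y⟫ = a * ‖x‖ ^ 2 - (a + b) * ⟪x, y⟫ + b * ‖y‖ ^ 2 := by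
    simp only [inner_sub_left, inner_sub_right, real_inner_smul_left, real_inner_self_eq_norm_sq,
      real_inner_comm x y]
    ring
  rw [hexpand]
  nlinarith [mul_le_mul_of_nonneg_left (real_inner_le_norm x y) hab]

theorem real_inner_radial_sub_nonneg {φ : ℝ → ℝ} (hφ : ∀ t, 0 ≤ t → 0 ≤ φ t)
    (hmono : MonotoneOn (fun t => t * φ t) (Ici 0)) (x y : E) :
    0 ≤ ⟪φ ‖x‖ • x - φ ‖y‖ • y, x - y⟫ := by
  refine real_inner_smul_sub_smul_sub_nonneg
    (add_nonneg (hφ _ (norm_nonneg x)) (hφ _ (norm_nonneg y))) x y ?_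
  rcases le_total ‖x‖ ‖y‖ with h | h
  · exact mul_nonneg_of_nonpos_of_nonpos (sub_nonpos.2 h)
      (sub_nonpos.2 (by simpa [mul_comm] using hmono (norm_nonneg x) (norm_nonneg y) h))
  · exact mul_nonneg (sub_nonneg.2 h)
      (sub_nonneg.2 (by simpa [mul_comm] using hmono (norm_nonneg y) (norm_nonneg x) h))

end

def frobVec {d : ℕ} (A : Fin d → Fin d → ℝ) : EuclideanSpace ℝ (Fin d × Fin d) :=
  WithLp.toLp 2 (Function.uncurry A)

theorem frob2_eq_inner {d : ℕ} (A B : Fin d → Fin d → ℝ) :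
    frob2 A B = ⟪frobVec A, frobVec B⟫ := by
  simp only [frob2, frobVec, PiLp.inner_apply, Fintype.sum_prod_type, Function.uncurry_apply_pair,
    Real.inner_apply]

theorem fnorm_eq_norm {d : ℕ} (A : Fin d → Fin d → ℝ) : fnorm A = ‖frobVec A‖ := by
  rw [fnorm, frob2_eq_inner, real_inner_self_eq_norm_sq, Real.sqrt_sq (norm_nonneg _)]

theorem frobVec_sub {d : ℕ} (A B : Fin d → Fin d → ℝ) :
    frobVec (A - B) = frobVec A - frobVec B := rfl

theorem frobVec_smul {d : ℕ} (c : ℝ) (A : Fin d → Fin d → ℝ) :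
    frobVec (c • A) = c • frobVec A := rfl

theorem stmt_10_general {d : ℕ} (ν ε r : ℝ) (hν : 0 < ν) (hε : 0 < ε)
    (hr1 : 1 < r)
    (D₁ D₂ : Fin d → Fin d → ℝ) :
    0 ≤ frob2 (carreau ν ε r D₁ - carreau ν ε r D₂) (D₁ - D₂) := by
  let φ : ℝ → ℝ := fun t => 2 * ν * (ε ^ 2 + t ^ 2) ^ ((r - 2) / 2)
  have hφ : ∀ t, 0 ≤ t → 0 ≤ φ t := fun t _ => by positivity
  have hmono : MonotoneOn (fun t => t * φ t) (Ici 0) := fun s hs t ht hst => by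
    have h := mul_le_mul_of_nonneg_left
      (monotoneOn_mul_rpow_add_sq (by positivity : 0 < ε ^ 2) hr1.le hs ht hst)
      (by positivity : 0 ≤ 2 * ν)
    convert h using 1 <;> ring
  simpa only [frob2_eq_inner, carreau, frobVec_sub, frobVec_smul, fnorm_eq_norm]
    using real_inner_radial_sub_nonneg hφ hmono (frobVec D₁) (frobVec D₂)

/-- The Carreau constitutive law with `ν > 0`, `ε > 0`, `r ∈ (1,2]` is monotone:
`(S(D₁) − S(D₂)) : (D₁ − D₂) ≥ 0` for all symmetric `D₁, D₂`. -/
theorem stmt_10 {d : ℕ} (ν ε r : ℝ) (hν : 0 < ν) (hε : 0 < ε)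
    (hr1 : 1 < r) (hr2 : r ≤ 2)
    (D₁ D₂ : Fin d → Fin d → ℝ)
    (hsym₁ : ∀ i j, D₁ i j = D₁ j i) (hsym₂ : ∀ i j, D₂ i j = D₂ j i) :
    0 ≤ frob2 (carreau ν ε r D₁ - carreau ν ε r D₂) (D₁ - D₂) :=
  stmt_10_general ν ε r hν hε hr1 D₁ D₂
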